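/- arXiv:2504.02774 — 5 statements merged into one kernel-verified Lean document; each statement's English description precedes it below -/
import Mathlib

section
/- Let K be a cone in a normed linear space X, let 0 < r < R, and fix h ∈ K with h ≠ 0. Define ρ : {x ∈ K : ‖x‖ ≤ R} → X by ρ(x) = r·(x + (r − ‖x‖)²h)/‖x + (r − ‖x‖)²h‖ if ‖x‖ < r, and ρ(x) = x if r ≤ ‖x‖ ≤ R. Then for every x ∈ K with ‖x‖ < r one has x + (r − ‖x‖)²h ≠ 0 (so ρ is well defined), ρ is continuous, ρ maps {x ∈ K : ‖x‖ ≤ R} into {x ∈ K : r ≤ ‖x‖ ≤ R} (in particular ‖ρ(x)‖ = r whenever ‖x‖ < r), and ρ(x) = x for every x ∈ K with r ≤ ‖x‖ ≤ R; that is, ρ is a retraction of {x ∈ K : ‖x‖ ≤ R} onto {x ∈ K : r ≤ ‖x‖ ≤ R}. -/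
open Set

/-- A cone in a normed linear space: a closed convex subset `K` such that
`λ • u ∈ K` for every `u ∈ K` and every `λ ≥ 0`, and `K ∩ (-K) = {0}`. -/
def IsCone {X : Type*} [NormedAddCommGroup X] [NormedSpace ℝ X] (K : Set X) : Prop :=
  IsClosed K ∧ Convex ℝ K ∧ (∀ u ∈ K, ∀ l : ℝ, 0 ≤ l → l • u ∈ K) ∧ K ∩ (-K) = {0}

/-!
Inside the cone, `x + (r - ‖x‖)² h` is a sum of two elements of `K`; since `K ∩ (-K) = {0}` it can
only vanish when both summands do, which is impossible for `h ≠ 0` and `r > 0`. Rescaling it to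
norm `r` is therefore continuous on `K`, and on the sphere `‖x‖ = r` the shift vanishes, so the
two branches of `ρ` glue continuously.
-/

namespace IsCone

variable {X : Type*} [NormedAddCommGroup X] [NormedSpace ℝ X] {K : Set X}

theorem smul_mem (hK : IsCone K) {u : X} (hu : u ∈ K) {l : ℝ} (hl : 0 ≤ l) : l • u ∈ K :=
  hK.2.2.1 u hu l hl

theorem add_mem (hK : IsCone K) {u v : X} (hu : u ∈ K) (hv : v ∈ K) : u + v ∈ K := by
  have hmid : (1 / 2 : ℝ) • u + (1 / 2 : ℝ) • v ∈ K :=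
    hK.2.1 hu hv (by norm_num) (by norm_num) (by norm_num)
  convert hK.smul_mem hmid (l := 2) (by norm_num) using 1
  rw [smul_add, smul_smul, smul_smul]
  norm_num

theorem eq_zero_of_add_eq_zero (hK : IsCone K) {u v : X} (hu : u ∈ K) (hv : v ∈ K)
    (huv : u + v = 0) : u = 0 := by
  have hneg : u ∈ -K := by
    rwa [mem_neg, neg_eq_of_add_eq_zero_right huv]
  have hu0 : u ∈ K ∩ -K := ⟨hu, hneg⟩
  rwa [hK.2.2.2, mem_singleton_iff] at hu0

theorem add_sq_smul_ne_zero (hK : IsCone K) {h : X} (hh : h ∈ K) (hh0 : h ≠ 0) {r : ℝ}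
    (hr : r ≠ 0) {x : X} (hx : x ∈ K) : x + (r - ‖x‖) ^ 2 • h ≠ 0 := by
  intro hsum
  have hshift : (r - ‖x‖) ^ 2 • h ∈ K := hK.smul_mem hh (sq_nonneg _)
  have hx0 : x = 0 := hK.eq_zero_of_add_eq_zero hx hshift hsum
  rw [hx0, zero_add, norm_zero, sub_zero] at hsum
  exact (smul_ne_zero (pow_ne_zero 2 hr) hh0) hsum

end IsCone

theorem norm_div_norm_smul {X : Type*} [NormedAddCommGroup X] [NormedSpace ℝ X] {r : ℝ}
    (hr : 0 ≤ r) {y : X} (hy : y ≠ 0) : ‖(r / ‖y‖) • y‖ = r := by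
  simpa [div_eq_mul_inv] using norm_smul_inv_norm' (𝕜 := ℝ) hr hy

theorem ContinuousOn.if_norm_lt {X Y : Type*} [SeminormedAddGroup X] [TopologicalSpace Y]
    {f g : X → Y} {s : Set X} {r : ℝ} (hf : ContinuousOn f (s ∩ {x | ‖x‖ ≤ r}))
    (hg : ContinuousOn g s) (hfg : ∀ x ∈ s, ‖x‖ = r → f x = g x) :
    ContinuousOn (fun x => if ‖x‖ < r then f x else g x) s := by
  refine ContinuousOn.if (fun x hx => hfg x hx.1 ?_) (hf.mono ?_) (hg.mono inter_subset_left)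
  · exact frontier_lt_subset_eq continuous_norm continuous_const hx.2
  · exact inter_subset_inter_right s (closure_lt_subset_le continuous_norm continuous_const)

/-- The map `ρ` is a retraction of the ball `{x ∈ K : ‖x‖ ≤ R}` of the cone `K`
onto the conical shell `{x ∈ K : r ≤ ‖x‖ ≤ R}`. -/
theorem retraction_onto_shell
    {X : Type*} [NormedAddCommGroup X] [NormedSpace ℝ X]
    (K : Set X) (hK : IsCone K)
    (r R : ℝ) (hr : 0 < r) (hrR : r < R)
    (h : X) (hhK : h ∈ K) (hh0 : h ≠ 0)
    (ρ : X → X)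
    (hρ : ∀ x : X, ρ x =
      if ‖x‖ < r then
        (r / ‖x + (r - ‖x‖) ^ 2 • h‖) • (x + (r - ‖x‖) ^ 2 • h)
      else x) :
    (∀ x ∈ K, ‖x‖ < r → x + (r - ‖x‖) ^ 2 • h ≠ 0) ∧
    ContinuousOn ρ {x ∈ K | ‖x‖ ≤ R} ∧
    MapsTo ρ {x ∈ K | ‖x‖ ≤ R} {x ∈ K | r ≤ ‖x‖ ∧ ‖x‖ ≤ R} ∧
    (∀ x ∈ K, ‖x‖ < r → ‖ρ x‖ = r) ∧
    (∀ x ∈ K, r ≤ ‖x‖ → ‖x‖ ≤ R → ρ x = x) := by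
  have hne : ∀ x ∈ K, x + (r - ‖x‖) ^ 2 • h ≠ 0 := fun x hx =>
    hK.add_sq_smul_ne_zero hhK hh0 hr.ne' hx
  have hnorm : ∀ x ∈ K, ‖x‖ < r → ‖ρ x‖ = r := fun x hx hxr => by
    rw [hρ, if_pos hxr, norm_div_norm_smul hr.le (hne x hx)]
  have hid : ∀ x, r ≤ ‖x‖ → ρ x = x := fun x hxr => by
    rw [hρ, if_neg hxr.not_gt]
  refine ⟨fun x hx _ => hne x hx, ?_, ?_, hnorm, fun x _ hxr _ => hid x hxr⟩
  · have hshift : Continuous fun x : X => x + (r - ‖x‖) ^ 2 • h := by fun_prop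
    rw [show ρ = _ from funext hρ]
    refine ContinuousOn.if_norm_lt ?_ continuousOn_id fun x _ hxr => ?_
    · exact (continuousOn_const.div hshift.norm.continuousOn fun x hx =>
        norm_ne_zero_iff.mpr (hne x hx.1.1)).smul hshift.continuousOn
    · simp [hxr, hr.ne']
  · rintro x ⟨hxK, hxR⟩
    by_cases hxr : ‖x‖ < r
    · refine ⟨?_, (hnorm x hxK hxr).ge, ((hnorm x hxK hxr).trans_lt hrR).le⟩
      rw [hρ, if_pos hxr]
      exact hK.smul_mem (hK.add_mem hxK (hK.smul_mem hhK (sq_nonneg _))) (by positivity)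
    · rw [hid x (not_lt.mp hxr)]
      exact ⟨hxK, not_lt.mp hxr, hxR⟩
end

section
/- Let K1 and K2 be cones in the normed linear spaces X1 and X2, K := K1 × K2, and let 0 < r_i < R_i and h_i ∈ K_i \ {0} (i = 1,2). Let ρ_i be the retraction of {x ∈ K_i : ‖x‖ ≤ R_i} onto {x ∈ K_i : r_i ≤ ‖x‖ ≤ R_i} given by ρ_i(x_i) = r_i·(x_i + (r_i − ‖x_i‖)²h_i)/‖x_i + (r_i − ‖x_i‖)²h_i‖ if ‖x_i‖ < r_i, and ρ_i(x_i) = x_i otherwise, and set ρ = (ρ1, ρ2). Suppose T = (T1, T2) : K̄_{r,R} → K is a compact map such that for each i ∈ {1,2} and all x ∈ K̄_{r,R}: ‖T_i x‖ ≥ ‖x_i‖ if ‖x_i‖ = r_i and ‖T_i x‖ ≤ ‖x_i‖ if ‖x_i‖ = R_i. Then the extension N := T ∘ ρ, defined on K̄_R := {(x1,x2) ∈ K : ‖x_i‖ ≤ R_i for i = 1,2}, is compact and satisfies, for each i ∈ {1,2} and all x ∈ K̄_R: ‖N_i x‖ ≥ ‖x_i‖ if ‖x_i‖ = r_i and ‖N_i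 x‖ ≤ ‖x_i‖ if ‖x_i‖ = R_i. -/
open Set

open Filter Topology in
theorem continuousAt_if_eq' {α β : Type*} [TopologicalSpace α] [TopologicalSpace β]
    {p : α → Prop} [DecidablePred p] {f g : α → β} {x : α}
    (hf : ContinuousAt f x) (hg : ContinuousAt g x) (hfg : f x = g x) :
    ContinuousAt (fun y => if p y then f y else g y) x := by
  have key : Tendsto (fun y => if p y then f y else g y) (𝓝 x) (𝓝 (f x)) := by
    rw [Filter.tendsto_def]
    intro U hU
    have h1 : f ⁻¹' U ∈ 𝓝 x := hf hU
    have h2 : g ⁻¹' U ∈ 𝓝 x := hg (hfg ▸ hU)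
    filter_upwards [h1, h2] with y hy1 hy2
    simp only [Set.mem_preimage]
    by_cases hp : p y
    · rw [if_pos hp]; exact hy1
    · rw [if_neg hp]; exact hy2
  have hval : (if p x then f x else g x) = f x := by split <;> simp [hfg]
  show Tendsto (fun y => if p y then f y else g y) (𝓝 x) (𝓝 (if p x then f x else g x))
  rw [hval]; exact key

theorem rho_props {X : Type*} [NormedAddCommGroup X] [NormedSpace ℝ X] {K : Set X}
    (hK : IsCone K) {r R : ℝ} (hr : 0 < r) (hrR : r ≤ R) {h : X} (hhK : h ∈ K) (hh0 : h ≠ 0)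
    (ρ : X → X)
    (hρ : ∀ x, ρ x = if ‖x‖ < r then
      (r / ‖x + (r - ‖x‖) ^ 2 • h‖) • (x + (r - ‖x‖) ^ 2 • h) else x) :
    (∀ x, r ≤ ‖x‖ → ρ x = x) ∧
    (∀ x ∈ K, ‖x‖ ≤ R → ρ x ∈ K ∧ r ≤ ‖ρ x‖ ∧ ‖ρ x‖ ≤ R) ∧
    (∀ x ∈ K, ContinuousAt ρ x) := by
  obtain ⟨-, hconv, hcone, hpoint⟩ := hK
  have hadd : ∀ u ∈ K, ∀ v ∈ K, u + v ∈ K := by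
    intro u hu v hv
    have hmid : (1/2 : ℝ) • u + (1/2 : ℝ) • v ∈ K :=
      hconv hu hv (by norm_num) (by norm_num) (by norm_num)
    have := hcone _ hmid 2 (by norm_num)
    simpa [smul_add, smul_smul] using this
  have hvne : ∀ x ∈ K, ‖x‖ < r → x + (r - ‖x‖) ^ 2 • h ≠ 0 := by
    intro x hx hxr hv0
    have hc : (0:ℝ) < (r - ‖x‖) ^ 2 := pow_pos (by linarith) 2
    have hch : (r - ‖x‖) ^ 2 • h ∈ K := hcone _ hhK _ hc.le
    have hmem : (r - ‖x‖) ^ 2 • h ∈ K ∩ (-K) := by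
      refine ⟨hch, ?_⟩
      have : (r - ‖x‖) ^ 2 • h = -x := by
        have := hv0; linear_combination (norm := abel) this
      rw [this]
      simpa using hx
    rw [hpoint] at hmem
    have : h = 0 := by
      have := hmem
      simp only [Set.mem_singleton_iff] at this
      exact (smul_eq_zero.1 this).resolve_left hc.ne'
    exact hh0 this
  have hvK : ∀ x ∈ K, x + (r - ‖x‖) ^ 2 • h ∈ K := by
    intro x hx
    exact hadd _ hx _ (hcone _ hhK _ (by positivity))
  refine ⟨?_, ?_, ?_⟩
  · intro x hx
    rw [hρ x, if_neg (not_lt.2 hx)]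
  · intro x hx hxR
    by_cases hxr : ‖x‖ < r
    · set v := x + (r - ‖x‖) ^ 2 • h with hv
      have hvne' : v ≠ 0 := hvne x hx hxr
      have hvnorm : (0:ℝ) < ‖v‖ := norm_pos_iff.2 hvne'
      have hρx : ρ x = (r / ‖v‖) • v := by rw [hρ x, if_pos hxr]
      have hnorm : ‖ρ x‖ = r := by
        rw [hρx, norm_smul, Real.norm_eq_abs, abs_of_pos (by positivity),
          div_mul_cancel₀ _ hvnorm.ne']
      exact ⟨hρx ▸ hcone _ (hvK x hx) _ (by positivity), by rw [hnorm], hnorm ▸ hrR⟩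
    · rw [hρ x, if_neg hxr]
      exact ⟨hx, not_lt.1 hxr, hxR⟩
  · intro x hx
    set g : X → X := fun y => (r / ‖y + (r - ‖y‖) ^ 2 • h‖) • (y + (r - ‖y‖) ^ 2 • h) with hg
    have hw : Continuous (fun z : X => z + (r - ‖z‖) ^ 2 • h) := by fun_prop
    have hgcont : ∀ y : X, y + (r - ‖y‖) ^ 2 • h ≠ 0 → ContinuousAt g y := by
      intro y hy
      exact ((continuousAt_const.div hw.norm.continuousAt
        (norm_ne_zero_iff.2 hy)).smul hw.continuousAt)
    have hρeq : ρ = fun y => if ‖y‖ < r then g y else y := funext hρ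
    rw [hρeq]
    rcases lt_trichotomy ‖x‖ r with hlt | heq | hgt
    · have hne := hvne x hx hlt
      refine (hgcont x hne).congr ?_
      filter_upwards [(isOpen_lt continuous_norm continuous_const).mem_nhds hlt] with y hy
      simp [hy]
    · refine continuousAt_if_eq' (hgcont x ?_) continuousAt_id ?_
      · have h0 : (r - ‖x‖) ^ 2 = 0 := by rw [heq]; ring
        rw [h0, zero_smul, add_zero]
        intro hx0
        rw [hx0] at heq
        simp at heq
        exact hr.ne' heq.symm
      · have : (r - ‖x‖) ^ 2 = 0 := by rw [heq]; ring
        simp [hg, this, heq, hr.ne']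
    · refine continuousAt_id.congr ?_
      filter_upwards [(isOpen_lt continuous_const continuous_norm).mem_nhds hgt] with y hy
      simp [not_lt.2 hy.le]

/-- The extension `N := T ∘ ρ` of a compressive-compressive compact map `T` to the
product of balls `K̄_R` is compact and still satisfies the compression conditions. -/
theorem extension_is_compact_and_compressive
    {X1 X2 : Type*} [NormedAddCommGroup X1] [NormedSpace ℝ X1]
    [NormedAddCommGroup X2] [NormedSpace ℝ X2]
    (K1 : Set X1) (K2 : Set X2) (hK1 : IsCone K1) (hK2 : IsCone K2)
    (r1 r2 R1 R2 : ℝ) (hr1 : 0 < r1) (hr2 : 0 < r2)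
    (hrR1 : r1 < R1) (hrR2 : r2 < R2)
    (h1 : X1) (hh1K : h1 ∈ K1) (hh10 : h1 ≠ 0)
    (h2 : X2) (hh2K : h2 ∈ K2) (hh20 : h2 ≠ 0)
    (ρ1 : X1 → X1)
    (hρ1 : ∀ x : X1, ρ1 x =
      if ‖x‖ < r1 then
        (r1 / ‖x + (r1 - ‖x‖) ^ 2 • h1‖) • (x + (r1 - ‖x‖) ^ 2 • h1)
      else x)
    (ρ2 : X2 → X2)
    (hρ2 : ∀ x : X2, ρ2 x =
      if ‖x‖ < r2 then
        (r2 / ‖x + (r2 - ‖x‖) ^ 2 • h2‖) • (x + (r2 - ‖x‖) ^ 2 • h2)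
      else x)
    (KrR KR : Set (X1 × X2))
    (hKrR : KrR = {x : X1 × X2 | x.1 ∈ K1 ∧ x.2 ∈ K2 ∧
      r1 ≤ ‖x.1‖ ∧ ‖x.1‖ ≤ R1 ∧ r2 ≤ ‖x.2‖ ∧ ‖x.2‖ ≤ R2})
    (hKR : KR = {x : X1 × X2 | x.1 ∈ K1 ∧ x.2 ∈ K2 ∧ ‖x.1‖ ≤ R1 ∧ ‖x.2‖ ≤ R2})
    (T : X1 × X2 → X1 × X2)
    (hmap : MapsTo T KrR (K1 ×ˢ K2))
    (hcont : ContinuousOn T KrR)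
    (hcpt : IsCompact (closure (T '' KrR)))
    (hT1 : ∀ x ∈ KrR, (‖x.1‖ = r1 → ‖x.1‖ ≤ ‖(T x).1‖) ∧ (‖x.1‖ = R1 → ‖(T x).1‖ ≤ ‖x.1‖))
    (hT2 : ∀ x ∈ KrR, (‖x.2‖ = r2 → ‖x.2‖ ≤ ‖(T x).2‖) ∧ (‖x.2‖ = R2 → ‖(T x).2‖ ≤ ‖x.2‖))
    (N : X1 × X2 → X1 × X2)
    (hN : ∀ x : X1 × X2, N x = T (ρ1 x.1, ρ2 x.2)) :
    MapsTo N KR (K1 ×ˢ K2) ∧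
    ContinuousOn N KR ∧
    IsCompact (closure (N '' KR)) ∧
    (∀ x ∈ KR, (‖x.1‖ = r1 → ‖x.1‖ ≤ ‖(N x).1‖) ∧ (‖x.1‖ = R1 → ‖(N x).1‖ ≤ ‖x.1‖)) ∧
    (∀ x ∈ KR, (‖x.2‖ = r2 → ‖x.2‖ ≤ ‖(N x).2‖) ∧ (‖x.2‖ = R2 → ‖(N x).2‖ ≤ ‖x.2‖)) := by
  obtain ⟨hρ1fix, hρ1mem, hρ1cont⟩ := rho_props hK1 hr1 hrR1.le hh1K hh10 ρ1 hρ1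
  obtain ⟨hρ2fix, hρ2mem, hρ2cont⟩ := rho_props hK2 hr2 hrR2.le hh2K hh20 ρ2 hρ2
  have hPmaps : MapsTo (fun x : X1 × X2 => (ρ1 x.1, ρ2 x.2)) KR KrR := by
    intro x hx
    rw [hKR] at hx
    obtain ⟨hx1, hx2, hR1, hR2⟩ := hx
    obtain ⟨m1, l1, u1⟩ := hρ1mem x.1 hx1 hR1
    obtain ⟨m2, l2, u2⟩ := hρ2mem x.2 hx2 hR2
    rw [hKrR]
    exact ⟨m1, m2, l1, u1, l2, u2⟩
  refine ⟨?_, ?_, ?_, ?_, ?_⟩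
  · intro x hx
    rw [hN x]
    exact hmap (hPmaps hx)
  · have : N = T ∘ fun x : X1 × X2 => (ρ1 x.1, ρ2 x.2) := funext hN
    rw [this]
    refine hcont.comp ?_ hPmaps
    intro x hx
    rw [hKR] at hx
    exact (((hρ1cont x.1 hx.1).comp continuousAt_fst).prodMk
      ((hρ2cont x.2 hx.2.1).comp continuousAt_snd)).continuousWithinAt
  · refine hcpt.of_isClosed_subset isClosed_closure (closure_mono ?_)
    rintro _ ⟨x, hx, rfl⟩
    exact ⟨(ρ1 x.1, ρ2 x.2), hPmaps hx, (hN x).symm⟩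
  · intro x hx
    have hP : (ρ1 x.1, ρ2 x.2) ∈ KrR := hPmaps hx
    constructor
    · intro hxr
      have hfix : ρ1 x.1 = x.1 := hρ1fix x.1 hxr.ge
      have := (hT1 _ hP).1 (by simpa [hfix] using hxr)
      rw [hN x]
      calc ‖x.1‖ = ‖(ρ1 x.1, ρ2 x.2).1‖ := by simp [hfix]
        _ ≤ _ := this
    · intro hxR
      have hfix : ρ1 x.1 = x.1 := hρ1fix x.1 (by rw [hxR]; linarith)
      have := (hT1 _ hP).2 (by simpa [hfix] using hxR)
      rw [hN x]
      calc ‖(T (ρ1 x.1, ρ2 x.2)).1‖ ≤ ‖(ρ1 x.1, ρ2 x.2).1‖ := this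
        _ = ‖x.1‖ := by simp [hfix]
  · intro x hx
    have hP : (ρ1 x.1, ρ2 x.2) ∈ KrR := hPmaps hx
    constructor
    · intro hxr
      have hfix : ρ2 x.2 = x.2 := hρ2fix x.2 hxr.ge
      have := (hT2 _ hP).1 (by simpa [hfix] using hxr)
      rw [hN x]
      calc ‖x.2‖ = ‖(ρ1 x.1, ρ2 x.2).2‖ := by simp [hfix]
        _ ≤ _ := this
    · intro hxR
      have hfix : ρ2 x.2 = x.2 := hρ2fix x.2 (by rw [hxR]; linarith)
      have := (hT2 _ hP).2 (by simpa [hfix] using hxR)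
      rw [hN x]
      calc ‖(T (ρ1 x.1, ρ2 x.2)).2‖ ≤ ‖(ρ1 x.1, ρ2 x.2).2‖ := this
        _ = ‖x.2‖ := by simp [hfix]
end

section
/- Let K1 and K2 be cones in the normed linear spaces X1 and X2, K := K1 × K2, and let 0 < r_i < R_i and h_i ∈ K_i \ {0} (i = 1,2). Let ρ_i be the retraction of {x ∈ K_i : ‖x‖ ≤ R_i} onto {x ∈ K_i : r_i ≤ ‖x‖ ≤ R_i} given by ρ_i(x_i) = r_i·(x_i + (r_i − ‖x_i‖)²h_i)/‖x_i + (r_i − ‖x_i‖)²h_i‖ if ‖x_i‖ < r_i, and ρ_i(x_i) = x_i otherwise, and set ρ = (ρ1, ρ2). Suppose T = (T1, T2) : K̄_{r,R} → K is a compact map such that for each i ∈ {1,2} and all x ∈ K̄_{r,R}: ‖T_i x‖ ≥ ‖x_i‖ if ‖x_i‖ = r_i and ‖T_i x‖ ≤ ‖x_i‖ if ‖x_i‖ = R_i. If T has no fixed points x ∈ K̄_{r,R} with ‖x_i‖ = r_i or ‖x_i‖ = R_i for some i ∈ {1,2}, then the extension N := T ∘ ρ has no fixed point x = (x1,x2)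 ∈ K̄_R := {(x1,x2) ∈ K : ‖x_i‖ ≤ R_i for i = 1,2} such that ‖x_i‖ = r_i or ‖x_i‖ = R_i for some i ∈ {1,2}. -/
/-! On the small ball `‖x_i‖ < r_i` the retraction lands on the sphere `‖ρ_i x_i‖ = r_i`, where `T`
is expansive in the `i`-th component; so a fixed point `x = T (ρ x)` would give
`‖x_i‖ = ‖T_i (ρ x)‖ ≥ r_i`, which is absurd. Hence a fixed point of `N` satisfies
`r_i ≤ ‖x_i‖` for both `i`, where `ρ x = x`, and it is a boundary fixed point of `T` itself. -/

open Set

section Cone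

variable {X : Type*} [NormedAddCommGroup X] [NormedSpace ℝ X] {K : Set X}

lemma IsCone.smul_mem_s7 (hK : IsCone K) {u : X} (hu : u ∈ K) {l : ℝ} (hl : 0 ≤ l) : l • u ∈ K :=
  hK.2.2.1 u hu l hl

lemma IsCone.add_mem_s7 (hK : IsCone K) {u v : X} (hu : u ∈ K) (hv : v ∈ K) : u + v ∈ K := by
  have hmid : (1 / 2 : ℝ) • u + (1 / 2 : ℝ) • v ∈ K :=
    hK.2.1 hu hv (by norm_num) (by norm_num) (by norm_num)
  have h2 : (2 : ℝ) • ((1 / 2 : ℝ) • u + (1 / 2 : ℝ) • v) = u + v := by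
    rw [smul_add, smul_smul, smul_smul]; norm_num
  simpa only [h2] using hK.smul_mem_s7 hmid zero_le_two

lemma IsCone.add_ne_zero (hK : IsCone K) {u v : X} (hu : u ∈ K) (hv : v ∈ K) (hv0 : v ≠ 0) :
    u + v ≠ 0 := by
  intro huv
  have hneg : v ∈ -K := by
    rwa [Set.mem_neg, ← eq_neg_of_add_eq_zero_left huv]
  have hv' : v ∈ K ∩ -K := ⟨hv, hneg⟩
  rw [hK.2.2.2] at hv'
  exact hv0 hv'

end Cone

section ShellRetraction

variable {X : Type*} [NormedAddCommGroup X] [NormedSpace ℝ X] {K : Set X}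

noncomputable def shellRetraction (r : ℝ) (h x : X) : X :=
  if ‖x‖ < r then (r / ‖x + (r - ‖x‖) ^ 2 • h‖) • (x + (r - ‖x‖) ^ 2 • h) else x

lemma shellRetraction_of_le {r : ℝ} (h : X) {x : X} (hx : r ≤ ‖x‖) :
    shellRetraction r h x = x :=
  if_neg hx.not_gt

lemma shellRetraction_of_lt {r : ℝ} (h : X) {x : X} (hx : ‖x‖ < r) :
    shellRetraction r h x = (r / ‖x + (r - ‖x‖) ^ 2 • h‖) • (x + (r - ‖x‖) ^ 2 • h) :=
  if_pos hx

lemma shellRetraction_mem (hK : IsCone K) {r : ℝ} {h x : X} (hh : h ∈ K) (hx : x ∈ K) :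
    shellRetraction r h x ∈ K := by
  by_cases hlt : ‖x‖ < r
  · rw [shellRetraction_of_lt h hlt]
    exact hK.smul_mem_s7 (hK.add_mem_s7 hx (hK.smul_mem_s7 hh (sq_nonneg _)))
      (div_nonneg ((norm_nonneg x).trans hlt.le) (norm_nonneg _))
  · rwa [shellRetraction_of_le h (not_lt.mp hlt)]

lemma norm_shellRetraction_of_lt (hK : IsCone K) {r : ℝ} {h x : X} (hh : h ∈ K) (hh0 : h ≠ 0)
    (hx : x ∈ K) (hlt : ‖x‖ < r) : ‖shellRetraction r h x‖ = r := by
  have hr : 0 ≤ r := (norm_nonneg x).trans hlt.le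
  -- the shift by a nonzero element of the pointed cone keeps the vector off `0`
  have hv0 : x + (r - ‖x‖) ^ 2 • h ≠ 0 :=
    hK.add_ne_zero hx (hK.smul_mem_s7 hh (sq_nonneg _))
      (smul_ne_zero (pow_ne_zero _ (sub_ne_zero.mpr hlt.ne')) hh0)
  rw [shellRetraction_of_lt h hlt, norm_smul, Real.norm_of_nonneg (div_nonneg hr (norm_nonneg _)),
    div_mul_cancel₀ _ (norm_ne_zero_iff.mpr hv0)]

lemma le_norm_shellRetraction (hK : IsCone K) {r : ℝ} {h x : X} (hh : h ∈ K) (hh0 : h ≠ 0)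
    (hx : x ∈ K) : r ≤ ‖shellRetraction r h x‖ := by
  by_cases hlt : ‖x‖ < r
  · exact (norm_shellRetraction_of_lt hK hh hh0 hx hlt).ge
  · rw [shellRetraction_of_le h (not_lt.mp hlt)]
    exact not_lt.mp hlt

lemma norm_shellRetraction_le (hK : IsCone K) {r R : ℝ} (hrR : r ≤ R) {h x : X} (hh : h ∈ K)
    (hh0 : h ≠ 0) (hx : x ∈ K) (hxR : ‖x‖ ≤ R) : ‖shellRetraction r h x‖ ≤ R := by
  by_cases hlt : ‖x‖ < r
  · rwa [norm_shellRetraction_of_lt hK hh hh0 hx hlt]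
  · rwa [shellRetraction_of_le h (not_lt.mp hlt)]

lemma le_norm_of_norm_shellRetraction_eq (hK : IsCone K) {r : ℝ} {h x : X} (hh : h ∈ K)
    (hh0 : h ≠ 0) (hx : x ∈ K) (hexp : ‖shellRetraction r h x‖ = r → r ≤ ‖x‖) : r ≤ ‖x‖ := by
  by_contra! hlt
  exact (hexp (norm_shellRetraction_of_lt hK hh hh0 hx hlt)).not_gt hlt

end ShellRetraction

theorem extension_no_boundary_fixed_points_general
    {X1 X2 : Type*} [NormedAddCommGroup X1] [NormedSpace ℝ X1]
    [NormedAddCommGroup X2] [NormedSpace ℝ X2]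
    (K1 : Set X1) (K2 : Set X2) (hK1 : IsCone K1) (hK2 : IsCone K2)
    (r1 r2 R1 R2 : ℝ)
    (hrR1 : r1 < R1) (hrR2 : r2 < R2)
    (h1 : X1) (hh1K : h1 ∈ K1) (hh10 : h1 ≠ 0)
    (h2 : X2) (hh2K : h2 ∈ K2) (hh20 : h2 ≠ 0)
    (ρ1 : X1 → X1)
    (hρ1 : ∀ x : X1, ρ1 x =
      if ‖x‖ < r1 then
        (r1 / ‖x + (r1 - ‖x‖) ^ 2 • h1‖) • (x + (r1 - ‖x‖) ^ 2 • h1)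
      else x)
    (ρ2 : X2 → X2)
    (hρ2 : ∀ x : X2, ρ2 x =
      if ‖x‖ < r2 then
        (r2 / ‖x + (r2 - ‖x‖) ^ 2 • h2‖) • (x + (r2 - ‖x‖) ^ 2 • h2)
      else x)
    (KrR KR : Set (X1 × X2))
    (hKrR : KrR = {x : X1 × X2 | x.1 ∈ K1 ∧ x.2 ∈ K2 ∧
      r1 ≤ ‖x.1‖ ∧ ‖x.1‖ ≤ R1 ∧ r2 ≤ ‖x.2‖ ∧ ‖x.2‖ ≤ R2})
    (hKR : KR = {x : X1 × X2 | x.1 ∈ K1 ∧ x.2 ∈ K2 ∧ ‖x.1‖ ≤ R1 ∧ ‖x.2‖ ≤ R2})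
    (T : X1 × X2 → X1 × X2)
    (hT1 : ∀ x ∈ KrR, (‖x.1‖ = r1 → ‖x.1‖ ≤ ‖(T x).1‖) ∧ (‖x.1‖ = R1 → ‖(T x).1‖ ≤ ‖x.1‖))
    (hT2 : ∀ x ∈ KrR, (‖x.2‖ = r2 → ‖x.2‖ ≤ ‖(T x).2‖) ∧ (‖x.2‖ = R2 → ‖(T x).2‖ ≤ ‖x.2‖))
    (hTfix : ∀ x ∈ KrR, (‖x.1‖ = r1 ∨ ‖x.1‖ = R1 ∨ ‖x.2‖ = r2 ∨ ‖x.2‖ = R2) → T x ≠ x)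
    (N : X1 × X2 → X1 × X2)
    (hN : ∀ x : X1 × X2, N x = T (ρ1 x.1, ρ2 x.2)) :
    ∀ x ∈ KR, (‖x.1‖ = r1 ∨ ‖x.1‖ = R1 ∨ ‖x.2‖ = r2 ∨ ‖x.2‖ = R2) → N x ≠ x := by
  obtain rfl : ρ1 = shellRetraction r1 h1 := funext hρ1
  obtain rfl : ρ2 = shellRetraction r2 h2 := funext hρ2
  rintro x hx hbd hfix
  obtain ⟨hx1K, hx2K, hx1R, hx2R⟩ : x ∈ {x : X1 × X2 | _} := hKR ▸ hx
  have hyKrR : (shellRetraction r1 h1 x.1, shellRetraction r2 h2 x.2) ∈ KrR :=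
    hKrR ▸ ⟨shellRetraction_mem hK1 hh1K hx1K, shellRetraction_mem hK2 hh2K hx2K,
      le_norm_shellRetraction hK1 hh1K hh10 hx1K,
      norm_shellRetraction_le hK1 hrR1.le hh1K hh10 hx1K hx1R,
      le_norm_shellRetraction hK2 hh2K hh20 hx2K,
      norm_shellRetraction_le hK2 hrR2.le hh2K hh20 hx2K hx2R⟩
  rw [hN] at hfix
  have hr1 : r1 ≤ ‖x.1‖ := le_norm_of_norm_shellRetraction_eq hK1 hh1K hh10 hx1K fun hn => by
    simpa only [hn, hfix] using (hT1 _ hyKrR).1 hn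
  have hr2 : r2 ≤ ‖x.2‖ := le_norm_of_norm_shellRetraction_eq hK2 hh2K hh20 hx2K fun hn => by
    simpa only [hn, hfix] using (hT2 _ hyKrR).1 hn
  rw [shellRetraction_of_le h1 hr1, shellRetraction_of_le h2 hr2] at hyKrR hfix
  exact hTfix x hyKrR hbd hfix

/-- If a compressive-compressive compact map `T` has no fixed points on the boundary
of the shell `K̄_{r,R}`, then neither does its extension `N := T ∘ ρ` on the boundary
spheres inside `K̄_R`. -/
theorem extension_no_boundary_fixed_points
    {X1 X2 : Type*} [NormedAddCommGroup X1] [NormedSpace ℝ X1]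
    [NormedAddCommGroup X2] [NormedSpace ℝ X2]
    (K1 : Set X1) (K2 : Set X2) (hK1 : IsCone K1) (hK2 : IsCone K2)
    (r1 r2 R1 R2 : ℝ) (hr1 : 0 < r1) (hr2 : 0 < r2)
    (hrR1 : r1 < R1) (hrR2 : r2 < R2)
    (h1 : X1) (hh1K : h1 ∈ K1) (hh10 : h1 ≠ 0)
    (h2 : X2) (hh2K : h2 ∈ K2) (hh20 : h2 ≠ 0)
    (ρ1 : X1 → X1)
    (hρ1 : ∀ x : X1, ρ1 x =
      if ‖x‖ < r1 then
        (r1 / ‖x + (r1 - ‖x‖) ^ 2 • h1‖) • (x + (r1 - ‖x‖) ^ 2 • h1)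
      else x)
    (ρ2 : X2 → X2)
    (hρ2 : ∀ x : X2, ρ2 x =
      if ‖x‖ < r2 then
        (r2 / ‖x + (r2 - ‖x‖) ^ 2 • h2‖) • (x + (r2 - ‖x‖) ^ 2 • h2)
      else x)
    (KrR KR : Set (X1 × X2))
    (hKrR : KrR = {x : X1 × X2 | x.1 ∈ K1 ∧ x.2 ∈ K2 ∧
      r1 ≤ ‖x.1‖ ∧ ‖x.1‖ ≤ R1 ∧ r2 ≤ ‖x.2‖ ∧ ‖x.2‖ ≤ R2})
    (hKR : KR = {x : X1 × X2 | x.1 ∈ K1 ∧ x.2 ∈ K2 ∧ ‖x.1‖ ≤ R1 ∧ ‖x.2‖ ≤ R2})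
    (T : X1 × X2 → X1 × X2)
    (hmap : MapsTo T KrR (K1 ×ˢ K2))
    (hcont : ContinuousOn T KrR)
    (hcpt : IsCompact (closure (T '' KrR)))
    (hT1 : ∀ x ∈ KrR, (‖x.1‖ = r1 → ‖x.1‖ ≤ ‖(T x).1‖) ∧ (‖x.1‖ = R1 → ‖(T x).1‖ ≤ ‖x.1‖))
    (hT2 : ∀ x ∈ KrR, (‖x.2‖ = r2 → ‖x.2‖ ≤ ‖(T x).2‖) ∧ (‖x.2‖ = R2 → ‖(T x).2‖ ≤ ‖x.2‖))
    (hTfix : ∀ x ∈ KrR, (‖x.1‖ = r1 ∨ ‖x.1‖ = R1 ∨ ‖x.2‖ = r2 ∨ ‖x.2‖ = R2) → T x ≠ x)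
    (N : X1 × X2 → X1 × X2)
    (hN : ∀ x : X1 × X2, N x = T (ρ1 x.1, ρ2 x.2)) :
    ∀ x ∈ KR, (‖x.1‖ = r1 ∨ ‖x.1‖ = R1 ∨ ‖x.2‖ = r2 ∨ ‖x.2‖ = R2) → N x ≠ x :=
  extension_no_boundary_fixed_points_general K1 K2 hK1 hK2 r1 r2 R1 R2 hrR1 hrR2 h1 hh1K hh10 h2
    hh2K hh20 ρ1 hρ1 ρ2 hρ2 KrR KR hKrR hKR T hT1 hT2 hTfix N hN
end

section
/- Let K1 and K2 be cones in the normed linear spaces X1 and X2, K := K1 × K2, and let 0 < r_i < R_i (i = 1,2). Let T = (T1, T2) : K̄_{r,R} → K be a map, set φ(s) := (R1 + r1)/s − 1 for s ∈ [r1, R1], and define S = (S1, S2) : K̄_{r,R} → K by S1(x1,x2) := φ(‖x1‖)⁻¹ · T1(φ(‖x1‖)·x1, x2) and S2(x1,x2) := T2(φ(‖x1‖)·x1, x2). Then: (i) if T satisfies ‖T1 x‖ ≤ ‖x1‖ whenever ‖x1‖ = r1 and ‖T1 x‖ ≥ ‖x1‖ whenever ‖x1‖ = R1 (for x ∈ K̄_{r,R}),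 then S satisfies ‖S1 x‖ ≥ ‖x1‖ whenever ‖x1‖ = r1 and ‖S1 x‖ ≤ ‖x1‖ whenever ‖x1‖ = R1; and (ii) if (v1, v2) ∈ K̄_{r,R} is a fixed point of S, then (φ(‖v1‖)·v1, v2) ∈ K̄_{r,R} is a fixed point of T. -/
open Set

/-- The transformation turning an expansive first component into a compressive one:
(i) `S` satisfies the compression conditions in the first component whenever `T`
satisfies the expansion ones, and (ii) any fixed point of `S` yields a fixed point
of `T`. -/
theorem expansive_to_compressive_transform
    {X1 X2 : Type*} [NormedAddCommGroup X1] [NormedSpace ℝ X1]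
    [NormedAddCommGroup X2] [NormedSpace ℝ X2]
    (K1 : Set X1) (K2 : Set X2) (hK1 : IsCone K1) (hK2 : IsCone K2)
    (r1 r2 R1 R2 : ℝ) (hr1 : 0 < r1) (hr2 : 0 < r2)
    (hrR1 : r1 < R1) (hrR2 : r2 < R2)
    (KrR : Set (X1 × X2))
    (hKrR : KrR = {x : X1 × X2 | x.1 ∈ K1 ∧ x.2 ∈ K2 ∧
      r1 ≤ ‖x.1‖ ∧ ‖x.1‖ ≤ R1 ∧ r2 ≤ ‖x.2‖ ∧ ‖x.2‖ ≤ R2})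
    (T : X1 × X2 → X1 × X2)
    (φ : ℝ → ℝ) (hφ : ∀ s : ℝ, φ s = (R1 + r1) / s - 1)
    (S : X1 × X2 → X1 × X2)
    (hS : ∀ x : X1 × X2, S x =
      ((φ ‖x.1‖)⁻¹ • (T (φ ‖x.1‖ • x.1, x.2)).1, (T (φ ‖x.1‖ • x.1, x.2)).2)) :
    ((∀ x ∈ KrR, (‖x.1‖ = r1 → ‖(T x).1‖ ≤ ‖x.1‖) ∧ (‖x.1‖ = R1 → ‖x.1‖ ≤ ‖(T x).1‖)) →
      ∀ x ∈ KrR, (‖x.1‖ = r1 → ‖x.1‖ ≤ ‖(S x).1‖) ∧ (‖x.1‖ = R1 → ‖(S x).1‖ ≤ ‖x.1‖)) ∧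
    (∀ v ∈ KrR, S v = v →
      (φ ‖v.1‖ • v.1, v.2) ∈ KrR ∧
      T (φ ‖v.1‖ • v.1, v.2) = (φ ‖v.1‖ • v.1, v.2)) := by
  have hcone := hK1.2.2.1
  have hR1pos : (0:ℝ) < R1 := hr1.trans hrR1
  constructor
  · intro hT x hx
    rw [hKrR] at hx
    obtain ⟨hx1, hx2, hr, hR, h2r, h2R⟩ := hx
    set c := φ ‖x.1‖ with hc
    constructor
    · intro hnorm
      have hφv : c = R1 / r1 := by
        rw [hc, hφ, hnorm]; field_simp; ring
      have hpos : (0:ℝ) < c := hφv ▸ div_pos hR1pos hr1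
      have hynorm : ‖c • x.1‖ = R1 := by
        rw [norm_smul, hnorm, Real.norm_eq_abs, abs_of_pos hpos, hφv]
        field_simp
      have hy : (c • x.1, x.2) ∈ KrR := by
        rw [hKrR]
        exact ⟨hcone _ hx1 _ hpos.le, hx2, by rw [hynorm]; exact hrR1.le,
          by rw [hynorm], h2r, h2R⟩
      have hT2 := (hT _ hy).2 (by exact hynorm)
      rw [hynorm] at hT2
      rw [hS]
      show ‖x.1‖ ≤ ‖c⁻¹ • (T (c • x.1, x.2)).1‖
      rw [norm_smul, Real.norm_eq_abs, abs_of_pos (inv_pos.mpr hpos)]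
      calc ‖x.1‖ = r1 := hnorm
        _ = c⁻¹ * R1 := by rw [hφv]; field_simp
        _ ≤ c⁻¹ * ‖(T (c • x.1, x.2)).1‖ :=
            mul_le_mul_of_nonneg_left hT2 (inv_pos.mpr hpos).le
    · intro hnorm
      have hφv : c = r1 / R1 := by
        rw [hc, hφ, hnorm]; field_simp; ring
      have hpos : (0:ℝ) < c := hφv ▸ div_pos hr1 hR1pos
      have hynorm : ‖c • x.1‖ = r1 := by
        rw [norm_smul, hnorm, Real.norm_eq_abs, abs_of_pos hpos, hφv]
        field_simp
      have hy : (c • x.1, x.2) ∈ KrR := by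
        rw [hKrR]
        exact ⟨hcone _ hx1 _ hpos.le, hx2, by rw [hynorm],
          by rw [hynorm]; exact hrR1.le, h2r, h2R⟩
      have hT2 := (hT _ hy).1 (by exact hynorm)
      rw [hynorm] at hT2
      rw [hS]
      show ‖c⁻¹ • (T (c • x.1, x.2)).1‖ ≤ ‖x.1‖
      rw [norm_smul, Real.norm_eq_abs, abs_of_pos (inv_pos.mpr hpos)]
      calc c⁻¹ * ‖(T (c • x.1, x.2)).1‖ ≤ c⁻¹ * r1 :=
            mul_le_mul_of_nonneg_left hT2 (inv_pos.mpr hpos).le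
        _ = R1 := by rw [hφv]; field_simp
        _ = ‖x.1‖ := hnorm.symm
  · intro v hv hfix
    rw [hKrR] at hv
    obtain ⟨hv1, hv2, hr, hR, h2r, h2R⟩ := hv
    have hspos : (0:ℝ) < ‖v.1‖ := hr1.trans_le hr
    have hcpos : 0 < φ ‖v.1‖ := by
      rw [hφ]
      have : ‖v.1‖ < R1 + r1 := lt_of_le_of_lt hR (by linarith)
      rw [sub_pos, lt_div_iff₀ hspos]
      linarith
    have hcn : ‖φ ‖v.1‖ • v.1‖ = R1 + r1 - ‖v.1‖ := by
      rw [norm_smul, Real.norm_eq_abs, abs_of_pos hcpos, hφ]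
      field_simp
    have hSv := (hS v).symm.trans hfix
    have h1 : (φ ‖v.1‖)⁻¹ • (T (φ ‖v.1‖ • v.1, v.2)).1 = v.1 := by
      have := congrArg Prod.fst hSv; simpa using this
    have h2 : (T (φ ‖v.1‖ • v.1, v.2)).2 = v.2 := by
      have := congrArg Prod.snd hSv; simpa using this
    have h1' : (T (φ ‖v.1‖ • v.1, v.2)).1 = φ ‖v.1‖ • v.1 := by
      have := congrArg (fun z => φ ‖v.1‖ • z) h1
      simpa [smul_smul, mul_inv_cancel₀ hcpos.ne'] using this
    constructor
    · rw [hKrR]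
      exact ⟨hcone _ hv1 _ hcpos.le, hv2, by rw [hcn]; linarith,
        by rw [hcn]; linarith, h2r, h2R⟩
    · exact Prod.ext h1' h2
end

section
/- Let T > 0, let G : [0,T] × [0,T] → ℝ be continuous with m := min G > 0 and M := max G, and let v : [0,T] → [0,∞) be continuous. Define u(t) := ∫₀ᵀ G(t,s) v(s) ds for t ∈ [0,T]. Then u is continuous, nonnegative, and satisfies min_{t∈[0,T]} u(t) ≥ (m/M) · max_{t∈[0,T]} u(t). -/
open Set

/-- For a positive continuous kernel `G` on `[0,T] × [0,T]` with minimum `m > 0` and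
maximum `M`, and a nonnegative continuous density `v`, the function
`u(t) = ∫₀ᵀ G(t,s) v(s) ds` is continuous, nonnegative and satisfies
`min u ≥ (m/M) · max u`. -/
theorem kernel_integral_cone_property
    (tmax : ℝ) (htmax : 0 < tmax)
    (G : ℝ → ℝ → ℝ)
    (hG : ContinuousOn (fun p : ℝ × ℝ => G p.1 p.2) (Icc 0 tmax ×ˢ Icc 0 tmax))
    (m M : ℝ)
    (hm : IsLeast (image2 G (Icc 0 tmax) (Icc 0 tmax)) m)
    (hM : IsGreatest (image2 G (Icc 0 tmax) (Icc 0 tmax)) M)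
    (hmpos : 0 < m)
    (v : ℝ → ℝ)
    (hv : ContinuousOn v (Icc 0 tmax))
    (hv0 : ∀ s ∈ Icc (0 : ℝ) tmax, 0 ≤ v s)
    (u : ℝ → ℝ)
    (hu : ∀ t : ℝ, u t = ∫ s in (0 : ℝ)..tmax, G t s * v s) :
    ContinuousOn u (Icc 0 tmax) ∧
    (∀ t ∈ Icc (0 : ℝ) tmax, 0 ≤ u t) ∧
    (∀ t ∈ Icc (0 : ℝ) tmax, ∀ t' ∈ Icc (0 : ℝ) tmax, (m / M) * u t' ≤ u t) := by
  have ht0 : (0 : ℝ) ≤ tmax := htmax.le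
  have hmem0 : (0 : ℝ) ∈ Icc (0 : ℝ) tmax := ⟨le_refl 0, ht0⟩
  have hmM : m ≤ M := hm.2 hM.1
  have hMpos : 0 < M := lt_of_lt_of_le hmpos hmM
  have hGmem : ∀ t ∈ Icc (0 : ℝ) tmax, ∀ s ∈ Icc (0 : ℝ) tmax, m ≤ G t s ∧ G t s ≤ M :=
    fun t ht s hs => ⟨hm.2 (mem_image2_of_mem ht hs), hM.2 (mem_image2_of_mem ht hs)⟩
  have hGt : ∀ t ∈ Icc (0 : ℝ) tmax, ContinuousOn (fun s => G t s * v s) (Icc 0 tmax) := by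
    intro t ht
    refine ContinuousOn.mul ?_ hv
    exact hG.comp ((continuous_const.prodMk continuous_id).continuousOn)
      (fun s hs => ⟨ht, hs⟩)
  have hInt : ∀ t ∈ Icc (0 : ℝ) tmax,
      IntervalIntegrable (fun s => G t s * v s) MeasureTheory.volume 0 tmax :=
    fun t ht => (hGt t ht).intervalIntegrable_of_Icc ht0
  have hvInt : IntervalIntegrable v MeasureTheory.volume 0 tmax :=
    hv.intervalIntegrable_of_Icc ht0
  set I := ∫ s in (0 : ℝ)..tmax, v s with hI
  have hI0 : 0 ≤ I := intervalIntegral.integral_nonneg ht0 (fun s hs => hv0 s hs)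
  have hlow : ∀ t ∈ Icc (0 : ℝ) tmax, m * I ≤ u t := by
    intro t ht
    rw [hu t, hI, ← intervalIntegral.integral_const_mul]
    refine intervalIntegral.integral_mono_on ht0 (hvInt.const_mul m) (hInt t ht) ?_
    intro s hs
    exact mul_le_mul_of_nonneg_right (hGmem t ht s hs).1 (hv0 s hs)
  have hhigh : ∀ t ∈ Icc (0 : ℝ) tmax, u t ≤ M * I := by
    intro t ht
    rw [hu t, hI, ← intervalIntegral.integral_const_mul]
    refine intervalIntegral.integral_mono_on ht0 (hInt t ht) (hvInt.const_mul M) ?_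
    intro s hs
    exact mul_le_mul_of_nonneg_right (hGmem t ht s hs).2 (hv0 s hs)
  refine ⟨?_, ?_, ?_⟩
  · -- continuity
    have hcont : ContinuousOn (fun p : ℝ × ℝ => G p.1 p.2 * v p.2)
        (Icc 0 tmax ×ˢ Icc 0 tmax) :=
      hG.mul (hv.comp continuous_snd.continuousOn (fun p hp => hp.2))
    obtain ⟨g, hg⟩ := ContinuousMap.exists_restrict_eq
      (Y := ℝ) ((isClosed_Icc (a := (0:ℝ)) (b := tmax)).prod isClosed_Icc)
      ⟨_, hcont.restrict⟩
    have hg' : ∀ p ∈ Icc (0 : ℝ) tmax ×ˢ Icc (0 : ℝ) tmax, g p = G p.1 p.2 * v p.2 :=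
      fun p hp => ContinuousMap.congr_fun hg ⟨p, hp⟩
    have hgc : Continuous (Function.uncurry fun t s : ℝ => g (t, s)) := g.continuous
    have hcg : Continuous (fun t : ℝ => ∫ s in Icc (0 : ℝ) tmax, g (t, s)) :=
      continuous_parametric_integral_of_continuous hgc isCompact_Icc
    refine ContinuousOn.congr hcg.continuousOn ?_
    intro t ht
    rw [hu t]
    rw [intervalIntegral.integral_of_le ht0, ← MeasureTheory.integral_Icc_eq_integral_Ioc]
    refine MeasureTheory.setIntegral_congr_fun measurableSet_Icc ?_
    intro s hs
    exact (hg' (t, s) ⟨ht, hs⟩).symm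
  · intro t ht
    exact le_trans (mul_nonneg hmpos.le hI0) (hlow t ht)
  · intro t ht t' ht'
    have h1 : (m / M) * u t' ≤ (m / M) * (M * I) :=
      mul_le_mul_of_nonneg_left (hhigh t' ht') (div_nonneg hmpos.le hMpos.le)
    have h2 : (m / M) * (M * I) = m * I := by
      field_simp
    exact h1.trans_eq h2 |>.trans (hlow t ht)
end
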